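/- arXiv:2211.15191 — 2 statements merged into one kernel-verified Lean document; each statement's English description precedes it below -/
import Mathlib

section
/- Let (H,R) be a finite-dimensional quasi-triangular Hopf algebra over a field k. Then the following are equivalent: (a) R²¹R ∈ Z(H)⊗H, where R²¹R = R₂²R₁¹ ⊗ R₂¹R₁² and Z(H) is the center of H (i.e. (H,R) is almost-triangular); (b) for every h ∈ H, (R₂²R₁¹)·_ad h ⊗ R₂¹R₁² = h ⊗ 1_H, where h·_ad l = h₍₁₎lS(h₍₂₎) is the left adjoint action. -/
open TensorProduct LinearMap

noncomputable section

namespace Paper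

variable {k : Type} [Field k]

section Generic

variable {A H : Type} [AddCommMonoid A] [Module k A] [AddCommMonoid H] [Module k H]

/-- Generic smash-product multiplication on `A ⊗ H`, built from a comultiplication `δH` on `H`,
multiplications `mH` on `H` and `mA` on `A`, and an action `act` of `H` on `A`.  On pure
tensors it is `(a ⊗ h) (b ⊗ g) = mA (a ⊗ (h₍₁₎ ⬝ b)) ⊗ mH (h₍₂₎ ⊗ g)`. -/
def gSmashMul (δH : H →ₗ[k] H ⊗[k] H) (mH : H ⊗[k] H →ₗ[k] H)
    (mA : A ⊗[k] A →ₗ[k] A) (act : H →ₗ[k] A →ₗ[k] A) :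
    (A ⊗[k] H) ⊗[k] (A ⊗[k] H) →ₗ[k] A ⊗[k] H :=
  (TensorProduct.map mA mH) ∘ₗ
  (TensorProduct.assoc k A A (H ⊗[k] H)).symm.toLinearMap ∘ₗ
  (LinearMap.lTensor A (TensorProduct.assoc k A H H).toLinearMap) ∘ₗ
  (LinearMap.lTensor A (LinearMap.rTensor H
    ((TensorProduct.comm k H A).toLinearMap ∘ₗ
     (LinearMap.lTensor H (TensorProduct.lift act)) ∘ₗ
     (TensorProduct.assoc k H H A).toLinearMap ∘ₗ
     (LinearMap.rTensor A (TensorProduct.comm k H H).toLinearMap) ∘ₗ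
     (LinearMap.rTensor A δH)))) ∘ₗ
  (LinearMap.lTensor A (TensorProduct.assoc k H A H).symm.toLinearMap) ∘ₗ
  (TensorProduct.assoc k A H (A ⊗[k] H)).toLinearMap

/-- Componentwise product on `M ⊗ N` from products (given as bilinear maps) on `M` and `N`. -/
def gTensorMul {M N : Type} [AddCommMonoid M] [Module k M] [AddCommMonoid N] [Module k N]
    (f : M ⊗[k] M →ₗ[k] M) (g : N ⊗[k] N →ₗ[k] N) :
    (M ⊗[k] N) ⊗[k] (M ⊗[k] N) →ₗ[k] M ⊗[k] N :=
  (TensorProduct.map f g) ∘ₗ (TensorProduct.tensorTensorTensorComm k M N M N).toLinearMap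

variable {S : Type} [AddCommMonoid S] [Module k S]

/-- The source counital map `X ↦ 1₍₁₎ ε(X 1₍₂₎)` of a weak bialgebra with multiplication `m`,
counit `ε`, and `Δ(1) = one2`. -/
def gEpsSrc (m : S ⊗[k] S →ₗ[k] S) (ε : S →ₗ[k] k) (one2 : S ⊗[k] S) : S →ₗ[k] S :=
  (TensorProduct.rid k S).toLinearMap ∘ₗ
  (LinearMap.lTensor S (ε ∘ₗ m ∘ₗ (TensorProduct.comm k S S).toLinearMap)) ∘ₗ
  (TensorProduct.assoc k S S S).toLinearMap ∘ₗ
  (TensorProduct.mk k (S ⊗[k] S) S one2)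

/-- The target counital map `X ↦ ε(1₍₁₎ X) 1₍₂₎` of a weak bialgebra with multiplication `m`,
counit `ε`, and `Δ(1) = one2`. -/
def gEpsTgt (m : S ⊗[k] S →ₗ[k] S) (ε : S →ₗ[k] k) (one2 : S ⊗[k] S) : S →ₗ[k] S :=
  (TensorProduct.lid k S).toLinearMap ∘ₗ
  (LinearMap.rTensor S (ε ∘ₗ m)) ∘ₗ
  (TensorProduct.assoc k S S S).symm.toLinearMap ∘ₗ
  (LinearMap.lTensor S (TensorProduct.comm k S S).toLinearMap) ∘ₗ
  (TensorProduct.assoc k S S S).toLinearMap ∘ₗ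
  (TensorProduct.mk k (S ⊗[k] S) S one2)

end Generic

section QT

variable {H : Type} [Ring H] [HopfAlgebra k H]
variable {A : Type} [Ring A] [Algebra k A]

/-- The smash product multiplication `(a # h)(b # g) = a (h₍₁₎ · b) # h₍₂₎ g` on `A ⊗ H`,
as a linear map on the tensor square. -/
def smashMulLin (act : H →ₗ[k] A →ₗ[k] A) :
    (A ⊗[k] H) ⊗[k] (A ⊗[k] H) →ₗ[k] A ⊗[k] H :=
  gSmashMul Coalgebra.comul (LinearMap.mul' k H) (LinearMap.mul' k A) act

/-- The smash product multiplication as a bilinear map. -/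
def smashMul (act : H →ₗ[k] A →ₗ[k] A) :
    (A ⊗[k] H) →ₗ[k] (A ⊗[k] H) →ₗ[k] A ⊗[k] H :=
  TensorProduct.curry (smashMulLin act)

/-- Componentwise multiplication on `(A#H) ⊗ (A#H)`. -/
def smashMul2Lin (act : H →ₗ[k] A →ₗ[k] A) :
    ((A ⊗[k] H) ⊗[k] (A ⊗[k] H)) ⊗[k] ((A ⊗[k] H) ⊗[k] (A ⊗[k] H)) →ₗ[k]
      (A ⊗[k] H) ⊗[k] (A ⊗[k] H) :=
  gTensorMul (smashMulLin act) (smashMulLin act)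

def smashMul2 (act : H →ₗ[k] A →ₗ[k] A) := TensorProduct.curry (smashMul2Lin act)

/-- Componentwise multiplication on `((A#H) ⊗ (A#H)) ⊗ (A#H)`. -/
def smashMul3Lin (act : H →ₗ[k] A →ₗ[k] A) := gTensorMul (smashMul2Lin act) (smashMulLin act)

def smashMul3 (act : H →ₗ[k] A →ₗ[k] A) := TensorProduct.curry (smashMul3Lin act)

variable {ι κ : Type} [Fintype ι] [Fintype κ]

/-- The element `1̃₍₁₎ ⊗ 1̃₍₂₎ = (R² · x¹ # R¹) ⊗ (x² # 1)` of `(A#H) ⊗ (A#H)`. -/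
def onetilde (act : H →ₗ[k] A →ₗ[k] A) (r1 r2 : ι → H) (x1 x2 : κ → A) :
    (A ⊗[k] H) ⊗[k] (A ⊗[k] H) :=
  ∑ i, ∑ j, ((act (r2 i) (x1 j)) ⊗ₜ[k] (r1 i)) ⊗ₜ[k] ((x2 j) ⊗ₜ[k] (1 : H))

/-- The comultiplication `Δ̃(a # h) = a (R² · x¹) # R¹ h₍₁₎ ⊗ x² # h₍₂₎` of the smash
product `A # H`. -/
def smashComul (act : H →ₗ[k] A →ₗ[k] A) (r1 r2 : ι → H) (x1 x2 : κ → A) :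
    A ⊗[k] H →ₗ[k] (A ⊗[k] H) ⊗[k] (A ⊗[k] H) :=
  (∑ i, ∑ j,
    (TensorProduct.map
      (TensorProduct.map (LinearMap.mulRight k (act (r2 i) (x1 j))) (LinearMap.mulLeft k (r1 i)))
      (TensorProduct.mk k A H (x2 j))) ∘ₗ
    (TensorProduct.assoc k A H H).symm.toLinearMap) ∘ₗ
  (LinearMap.lTensor A Coalgebra.comul)

/-- The counit `ε̃(a # h) = α_A(a) ε(h)` of the smash product `A # H`. -/
def smashCounit (αA : A →ₗ[k] k) : A ⊗[k] H →ₗ[k] k :=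
  (TensorProduct.lid k k).toLinearMap ∘ₗ TensorProduct.map αA Coalgebra.counit

/-- The antipode `S̃(a # h) = (1 # S(h)) (R² · a # R¹)` of the smash product `A # H`. -/
def smashAntipode (act : H →ₗ[k] A →ₗ[k] A) (r1 r2 : ι → H) :
    A ⊗[k] H →ₗ[k] A ⊗[k] H :=
  ∑ i, (smashMulLin act) ∘ₗ
    (TensorProduct.map (TensorProduct.mk k A H 1) ((TensorProduct.mk k A H).flip (r1 i))) ∘ₗ
    (TensorProduct.map (HopfAlgebra.antipode (R := k)) (act (r2 i))) ∘ₗ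
    (TensorProduct.comm k A H).toLinearMap

/-- The source counital map `ε̃ₛ(X) = 1̃₍₁₎ ε̃(X 1̃₍₂₎)` of `A # H`,
where `1̃₍₁₎ ⊗ 1̃₍₂₎ = Δ̃(1 # 1)`. -/
def smashEpsSrc (act : H →ₗ[k] A →ₗ[k] A) (r1 r2 : ι → H) (x1 x2 : κ → A)
    (αA : A →ₗ[k] k) : A ⊗[k] H →ₗ[k] A ⊗[k] H :=
  gEpsSrc (smashMulLin act) (smashCounit αA)
    (smashComul act r1 r2 x1 x2 ((1 : A) ⊗ₜ[k] (1 : H)))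

/-- The target counital map `ε̃ₜ(X) = ε̃(1̃₍₁₎ X) 1̃₍₂₎` of `A # H`,
where `1̃₍₁₎ ⊗ 1̃₍₂₎ = Δ̃(1 # 1)`. -/
def smashEpsTgt (act : H →ₗ[k] A →ₗ[k] A) (r1 r2 : ι → H) (x1 x2 : κ → A)
    (αA : A →ₗ[k] k) : A ⊗[k] H →ₗ[k] A ⊗[k] H :=
  gEpsTgt (smashMulLin act) (smashCounit αA)
    (smashComul act r1 r2 x1 x2 ((1 : A) ⊗ₜ[k] (1 : H)))

end QT

section Ad

variable {H : Type} [Ring H] [HopfAlgebra k H]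

/-- The left adjoint action `g ⊗ h ↦ g₍₁₎ h S(g₍₂₎)` as a linear map on `H ⊗ H`. -/
def adLin : H ⊗[k] H →ₗ[k] H :=
  (LinearMap.mul' k H) ∘ₗ
  (LinearMap.lTensor H ((LinearMap.mul' k H) ∘ₗ
     (LinearMap.lTensor H (HopfAlgebra.antipode (R := k))) ∘ₗ
     (TensorProduct.comm k H H).toLinearMap)) ∘ₗ
  (TensorProduct.assoc k H H H).toLinearMap ∘ₗ
  (LinearMap.rTensor H Coalgebra.comul)

/-- The left adjoint action as a bilinear map: `adE g h = g₍₁₎ h S(g₍₂₎)`. -/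
def adE : H →ₗ[k] H →ₗ[k] H := TensorProduct.curry (adLin (k := k))

variable {ι : Type} [Fintype ι]

/-- The transmuted ("braided group") comultiplication
`Δ_R(h) = h₍₁₎ S(R²) ⊗ R¹ ·_ad h₍₂₎` on `H`. -/
def DeltaR (r1 r2 : ι → H) : H →ₗ[k] H ⊗[k] H :=
  ∑ i, (TensorProduct.map
          (LinearMap.mulRight k (HopfAlgebra.antipode (R := k) (r2 i)))
          (adE (r1 i))) ∘ₗ Coalgebra.comul

end Ad

end Paper

open Paper

namespace St11aux

open Coalgebra HopfAlgebra

variable {k : Type} [Field k] {H : Type} [Ring H] [HopfAlgebra k H]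

/-- `a ⊗ b ↦ a * h * S b`. -/
def adAp (h : H) : H ⊗[k] H →ₗ[k] H :=
  LinearMap.mul' k H ∘ₗ TensorProduct.map (LinearMap.mulRight k h) (HopfAlgebra.antipode (R := k))

@[simp] lemma adAp_tmul (h a b : H) :
    adAp (k := k) h (a ⊗ₜ[k] b) = a * h * HopfAlgebra.antipode (R := k) b := by
  simp [adAp]

lemma adE_eq (x h : H) :
    Paper.adE (k := k) x h = adAp (k := k) h (Coalgebra.comul (R := k) x) := by
  have tail : ∀ w : H ⊗[k] H,
      (LinearMap.mul' k H) ((LinearMap.lTensor H ((LinearMap.mul' k H) ∘ₗ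
        (LinearMap.lTensor H (HopfAlgebra.antipode (R := k))) ∘ₗ
        (TensorProduct.comm k H H).toLinearMap))
        ((TensorProduct.assoc k H H H) (w ⊗ₜ[k] h))) = adAp (k := k) h w := by
    intro w
    induction w using TensorProduct.induction_on with
    | zero =>
        rw [TensorProduct.zero_tmul, LinearEquiv.map_zero, map_zero, map_zero, map_zero]
    | tmul a b => simp [mul_assoc]
    | add x y hx hy => simp only [TensorProduct.add_tmul, map_add, hx, hy]
  rw [Paper.adE, Paper.adLin]
  simp only [TensorProduct.curry_apply, LinearMap.comp_apply, LinearMap.rTensor_tmul,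
    LinearEquiv.coe_coe]
  exact tail _

/-- `x ⊗ y ↦ (x ⊗ 1) ⊗ y`. -/
def psiMap : H ⊗[k] H →ₗ[k] (H ⊗[k] H) ⊗[k] H :=
  LinearMap.rTensor H ((TensorProduct.mk k H H).flip 1)

@[simp] lemma psiMap_tmul (x y : H) :
    psiMap (k := k) (x ⊗ₜ[k] y) = (x ⊗ₜ[k] (1 : H)) ⊗ₜ[k] y := by
  simp [psiMap]

/-- `(a ⊗ b) ⊗ c ↦ (a * S b) ⊗ c`. -/
def kap : (H ⊗[k] H) ⊗[k] H →ₗ[k] H ⊗[k] H :=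
  LinearMap.rTensor H (LinearMap.mul' k H ∘ₗ
    LinearMap.lTensor H (HopfAlgebra.antipode (R := k)))

@[simp] lemma kap_tmul (a b c : H) :
    kap (k := k) ((a ⊗ₜ[k] b) ⊗ₜ[k] c)
      = (a * HopfAlgebra.antipode (R := k) b) ⊗ₜ[k] c := by
  simp [kap]

/-- `(a ⊗ u) ⊗ y ↦ ε(u) • (a * h) ⊗ y`. -/
def dmap (h : H) : (H ⊗[k] H) ⊗[k] H →ₗ[k] H ⊗[k] H :=
  LinearMap.rTensor H (LinearMap.mulRight k h ∘ₗ (TensorProduct.rid k H).toLinearMap ∘ₗ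
    LinearMap.lTensor H (Coalgebra.counit (R := k)))

@[simp] lemma dmap_tmul (h a u y : H) :
    dmap (k := k) h ((a ⊗ₜ[k] u) ⊗ₜ[k] y)
      = (Coalgebra.counit (R := k) u) • ((a * h) ⊗ₜ[k] y) := by
  simp [dmap, TensorProduct.smul_tmul', smul_mul_assoc]

/-- `(a ⊗ (u ⊗ v)) ⊗ y ↦ ((a * h) * (S u * v)) ⊗ y`. -/
def emap (h : H) : (H ⊗[k] (H ⊗[k] H)) ⊗[k] H →ₗ[k] H ⊗[k] H :=
  LinearMap.rTensor H (LinearMap.mul' k H ∘ₗ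
    TensorProduct.map (LinearMap.mulRight k h)
      (LinearMap.mul' k H ∘ₗ LinearMap.rTensor H (HopfAlgebra.antipode (R := k))))

@[simp] lemma emap_tmul (h a u v y : H) :
    emap (k := k) h ((a ⊗ₜ[k] (u ⊗ₜ[k] v)) ⊗ₜ[k] y)
      = ((a * h) * (HopfAlgebra.antipode (R := k) u * v)) ⊗ₜ[k] y := by
  simp [emap]

lemma emap_comul (h : H) (w : H ⊗[k] H) (y : H) :
    emap (k := k) h ((LinearMap.lTensor H (Coalgebra.comul (R := k)) w) ⊗ₜ[k] y)
      = dmap (k := k) h (w ⊗ₜ[k] y) := by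
  induction w using TensorProduct.induction_on with
  | zero =>
      rw [LinearMap.map_zero, TensorProduct.zero_tmul, TensorProduct.zero_tmul,
        LinearMap.map_zero, LinearMap.map_zero]
  | tmul a u =>
      rw [LinearMap.lTensor_tmul, emap, LinearMap.rTensor_tmul, dmap, LinearMap.rTensor_tmul]
      simp only [LinearMap.comp_apply, TensorProduct.map_tmul,
        HopfAlgebra.mul_antipode_rTensor_comul_apply, LinearMap.mul'_apply,
        LinearMap.lTensor_tmul, LinearEquiv.coe_coe, TensorProduct.rid_tmul,
        LinearMap.mulRight_apply, Algebra.algebraMap_eq_smul_one, mul_smul_comm, mul_one,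
        smul_mul_assoc]
  | add w1 w2 h1 h2 =>
      simp only [map_add, TensorProduct.add_tmul, h1, h2]

lemma dmap_comul (h x y : H) :
    dmap (k := k) h ((Coalgebra.comul (R := k) x) ⊗ₜ[k] y) = (x * h) ⊗ₜ[k] y := by
  rw [dmap, LinearMap.rTensor_tmul]
  simp only [LinearMap.comp_apply, Coalgebra.lTensor_counit_comul, LinearEquiv.coe_coe,
    TensorProduct.rid_tmul, one_smul, LinearMap.mulRight_apply]

lemma emap_assoc (h x y : H) :
    emap (k := k) h (((TensorProduct.assoc k H H H)
        (LinearMap.rTensor H (Coalgebra.comul (R := k)) (Coalgebra.comul (R := k) x))) ⊗ₜ[k] y)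
      = dmap (k := k) h ((Coalgebra.comul (R := k) x) ⊗ₜ[k] y) := by
  rw [Coalgebra.coassoc_apply, emap_comul]

lemma sum_rot3 {M ι : Type} [AddCommMonoid M] [Fintype ι] (f : ι → ι → ι → M) :
    (∑ a, ∑ b, ∑ c, f a b c) = ∑ c, ∑ a, ∑ b, f a b c := by
  calc (∑ a, ∑ b, ∑ c, f a b c) = ∑ a, ∑ c, ∑ b, f a b c :=
        Finset.sum_congr rfl fun a _ => Finset.sum_comm
    _ = ∑ c, ∑ a, ∑ b, f a b c := Finset.sum_comm

lemma sum_rot4 {M ι : Type} [AddCommMonoid M] [Fintype ι] (f : ι → ι → ι → ι → M) :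
    (∑ a, ∑ b, ∑ c, ∑ d, f a b c d) = ∑ d, ∑ a, ∑ b, ∑ c, f a b c d := by
  calc (∑ a, ∑ b, ∑ c, ∑ d, f a b c d) = ∑ a, ∑ d, ∑ b, ∑ c, f a b c d :=
        Finset.sum_congr rfl fun a _ => sum_rot3 _
    _ = ∑ d, ∑ a, ∑ b, ∑ c, f a b c d := Finset.sum_comm

lemma sum_rev4 {M ι : Type} [AddCommMonoid M] [Fintype ι] (f : ι → ι → ι → ι → M) :
    (∑ a, ∑ b, ∑ c, ∑ d, f a b c d) = ∑ d, ∑ c, ∑ b, ∑ a, f a b c d := by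
  rw [sum_rot4]
  refine Finset.sum_congr rfl fun d _ => ?_
  rw [sum_rot3]
  exact Finset.sum_congr rfl fun c _ => Finset.sum_comm

lemma mem_center_tensor [FiniteDimensional k H] (X : H ⊗[k] H)
    (hX : ∀ h : H, X * (h ⊗ₜ[k] (1 : H)) = (h ⊗ₜ[k] (1 : H)) * X) :
    X ∈ LinearMap.range (LinearMap.rTensor H
      (Subalgebra.toSubmodule (Subalgebra.center k H)).subtype) := by
  classical
  let b := Module.finBasis k H
  let c : Fin (Module.finrank k H) → (H ⊗[k] H →ₗ[k] H) := fun j =>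
    (TensorProduct.rid k H).toLinearMap ∘ₗ LinearMap.lTensor H (b.coord j)
  have hc : ∀ (j) (x y : H), c j (x ⊗ₜ[k] y) = b.repr y j • x := by
    intro j x y
    simp [c, Module.Basis.coord_apply]
  have hrep : ∀ Y : H ⊗[k] H, Y = ∑ j, (c j Y) ⊗ₜ[k] b j := by
    intro Y
    induction Y using TensorProduct.induction_on with
    | zero => simp
    | tmul x y =>
        simp only [hc]
        have hs : ∀ j : Fin (Module.finrank k H),
            ((b.repr y) j • x) ⊗ₜ[k] b j = x ⊗ₜ[k] ((b.repr y) j • b j) :=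
          fun j => TensorProduct.smul_tmul _ _ _
        simp only [hs]
        rw [← TensorProduct.tmul_sum, Module.Basis.sum_repr]
    | add u v hu hv =>
        simp only [map_add, TensorProduct.add_tmul, Finset.sum_add_distrib]
        rw [← hu, ← hv]
  have hmulr : ∀ (j) (Y : H ⊗[k] H) (h : H), c j (Y * (h ⊗ₜ[k] 1)) = c j Y * h := by
    intro j Y h
    induction Y using TensorProduct.induction_on with
    | zero => simp
    | tmul x y => simp [hc, Algebra.TensorProduct.tmul_mul_tmul, smul_mul_assoc]
    | add u v hu hv => simp only [add_mul, map_add, hu, hv]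
  have hmull : ∀ (j) (Y : H ⊗[k] H) (h : H), c j ((h ⊗ₜ[k] 1) * Y) = h * c j Y := by
    intro j Y h
    induction Y using TensorProduct.induction_on with
    | zero => simp
    | tmul x y => simp [hc, Algebra.TensorProduct.tmul_mul_tmul, mul_smul_comm]
    | add u v hu hv => simp only [mul_add, map_add, hu, hv, mul_add]
  have hcent : ∀ j, c j X ∈ Subalgebra.toSubmodule (Subalgebra.center k H) := by
    intro j
    rw [Subalgebra.mem_toSubmodule, Subalgebra.mem_center_iff]
    intro g
    rw [← hmull j X g, ← hmulr j X g, hX]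
  refine ⟨∑ j, (⟨c j X, hcent j⟩ :
      (Subalgebra.toSubmodule (Subalgebra.center k H))) ⊗ₜ[k] b j, ?_⟩
  rw [map_sum]
  simp only [LinearMap.rTensor_tmul, Submodule.coe_subtype]
  exact (hrep X).symm

end St11aux

open St11aux

set_option maxHeartbeats 3200000
set_option synthInstance.maxHeartbeats 1000000

/-- For a finite-dimensional quasi-triangular Hopf algebra `(H,R)` over a
field `k`, the following are equivalent: (a) `R²¹R = R₂²R₁¹ ⊗ R₂¹R₁² ∈ Z(H) ⊗ H`
(i.e. `(H,R)` is almost-triangular); (b) `(R₂²R₁¹) ·_ad h ⊗ R₂¹R₁² = h ⊗ 1` for all `h ∈ H`,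
where `·_ad` is the left adjoint action. -/
theorem statement_11
    {k : Type} [Field k]
    {H : Type} [Ring H] [HopfAlgebra k H] [FiniteDimensional k H]
    {ι : Type} [Fintype ι] (r1 r2 : ι → H)
    (hR_inv : IsUnit (∑ i, r1 i ⊗ₜ[k] r2 i))
    (hR_nat : ∀ h : H, (∑ i, r1 i ⊗ₜ[k] r2 i) * Coalgebra.comul h
      = ((TensorProduct.comm k H H) (Coalgebra.comul h)) * (∑ i, r1 i ⊗ₜ[k] r2 i))
    (hR_comul_left : TensorProduct.map (Coalgebra.comul (R := k)) LinearMap.id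
        (∑ i, r1 i ⊗ₜ[k] r2 i)
      = ∑ i, ∑ j, (r1 i ⊗ₜ[k] r1 j) ⊗ₜ[k] (r2 i * r2 j))
    (hR_comul_right : TensorProduct.map LinearMap.id (Coalgebra.comul (R := k))
        (∑ i, r1 i ⊗ₜ[k] r2 i)
      = ∑ i, ∑ j, (r1 i * r1 j) ⊗ₜ[k] (r2 j ⊗ₜ[k] r2 i)) :
    ((∑ i, ∑ l, (r2 l * r1 i) ⊗ₜ[k] (r1 l * r2 i))
        ∈ LinearMap.range (LinearMap.rTensor H
            (Subalgebra.toSubmodule (Subalgebra.center k H)).subtype))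
      ↔ (∀ h : H, ∑ i, ∑ l, (adE (k := k) (r2 l * r1 i) h) ⊗ₜ[k] (r1 l * r2 i)
          = h ⊗ₜ[k] (1 : H)) := by
  classical
  -- Expansion of `∑ Δ(r2 l) ⊗ r1 l`.
  have hA : (∑ l, (Coalgebra.comul (R := k) (r2 l)) ⊗ₜ[k] (r1 l) : (H ⊗[k] H) ⊗[k] H)
      = ∑ l, ∑ m, ((r2 m ⊗ₜ[k] r2 l) ⊗ₜ[k] (r1 l * r1 m)) := by
    have h2 := congrArg (TensorProduct.comm k H (H ⊗[k] H)) hR_comul_right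
    simpa [map_sum] using h2
  -- Expansion of `∑ Δ(r1 i) ⊗ r2 i`.
  have hB : (∑ i, (Coalgebra.comul (R := k) (r1 i)) ⊗ₜ[k] (r2 i) : (H ⊗[k] H) ⊗[k] H)
      = ∑ i, ∑ j, ((r1 i ⊗ₜ[k] r1 j) ⊗ₜ[k] (r2 i * r2 j)) := by
    simpa [map_sum] using hR_comul_left
  -- The key expansion of `(Δ ⊗ id)(Q)`.
  have hP : (∑ i, ∑ l, (Coalgebra.comul (R := k) (r2 l * r1 i)) ⊗ₜ[k] (r1 l * r2 i)
        : (H ⊗[k] H) ⊗[k] H)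
      = ∑ l, ∑ m, ∑ i, ∑ j,
          (((r2 m * r1 i) ⊗ₜ[k] (r2 l * r1 j)) ⊗ₜ[k] (r1 l * (r1 m * (r2 i * r2 j)))) := by
    have lhs_eq : (∑ i, ∑ l,
          (Coalgebra.comul (R := k) (r2 l * r1 i)) ⊗ₜ[k] (r1 l * r2 i)
          : (H ⊗[k] H) ⊗[k] H)
        = (∑ l, (Coalgebra.comul (R := k) (r2 l)) ⊗ₜ[k] (r1 l))
          * (∑ i, (Coalgebra.comul (R := k) (r1 i)) ⊗ₜ[k] (r2 i)) := by
      rw [Finset.sum_mul_sum, Finset.sum_comm]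
      simp [Bialgebra.comul_mul, Algebra.TensorProduct.tmul_mul_tmul]
    rw [lhs_eq, hA, hB]
    simp only [Finset.sum_mul, Finset.mul_sum, Algebra.TensorProduct.tmul_mul_tmul, mul_assoc]
    -- reorder the four sums
    calc (∑ i : ι, ∑ j : ι, ∑ l : ι, ∑ m : ι,
            (((r2 m * r1 i) ⊗ₜ[k] (r2 l * r1 j)) ⊗ₜ[k] (r1 l * (r1 m * (r2 i * r2 j)))))
        = ∑ i : ι, ∑ l : ι, ∑ j : ι, ∑ m : ι,
            (((r2 m * r1 i) ⊗ₜ[k] (r2 l * r1 j)) ⊗ₜ[k] (r1 l * (r1 m * (r2 i * r2 j)))) :=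
          Finset.sum_congr rfl fun i _ => Finset.sum_comm
      _ = ∑ l : ι, ∑ i : ι, ∑ j : ι, ∑ m : ι,
            (((r2 m * r1 i) ⊗ₜ[k] (r2 l * r1 j)) ⊗ₜ[k] (r1 l * (r1 m * (r2 i * r2 j)))) :=
          Finset.sum_comm
      _ = ∑ l : ι, ∑ i : ι, ∑ m : ι, ∑ j : ι,
            (((r2 m * r1 i) ⊗ₜ[k] (r2 l * r1 j)) ⊗ₜ[k] (r1 l * (r1 m * (r2 i * r2 j)))) :=
          Finset.sum_congr rfl fun l _ => Finset.sum_congr rfl fun i _ =>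
            Finset.sum_comm
      _ = ∑ l : ι, ∑ m : ι, ∑ i : ι, ∑ j : ι,
            (((r2 m * r1 i) ⊗ₜ[k] (r2 l * r1 j)) ⊗ₜ[k] (r1 l * (r1 m * (r2 i * r2 j)))) :=
          Finset.sum_congr rfl fun l _ => Finset.sum_comm
  -- `(ε ⊗ id)(R) = 1` and `(id ⊗ ε)(R) = 1`.
  have hF : ((∑ l, (Coalgebra.counit (R := k) (r2 l)) • r1 l) ⊗ₜ[k] (1 : H))
      = (1 : H) ⊗ₜ[k] (1 : H) := by
    have h2 := congrArg (LinearMap.lTensor H ((TensorProduct.lid k H).toLinearMap ∘ₗ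
        LinearMap.rTensor H (Coalgebra.counit (R := k)))) hR_comul_right
    simp only [map_sum, TensorProduct.map_tmul, LinearMap.id_coe, id_eq,
      LinearMap.lTensor_tmul, LinearMap.comp_apply, Coalgebra.rTensor_counit_comul,
      LinearEquiv.coe_coe, TensorProduct.lid_tmul, one_smul, LinearMap.rTensor_tmul,
      TensorProduct.tmul_smul] at h2
    have key : (∑ i, r1 i ⊗ₜ[k] r2 i)
          * ((∑ l, (Coalgebra.counit (R := k) (r2 l)) • r1 l) ⊗ₜ[k] (1 : H))
        = (∑ i, r1 i ⊗ₜ[k] r2 i) * 1 := by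
      rw [mul_one]
      conv_rhs => rw [h2]
      simp only [TensorProduct.sum_tmul, TensorProduct.smul_tmul', Finset.sum_mul,
        Finset.mul_sum, mul_smul_comm, Algebra.TensorProduct.tmul_mul_tmul, mul_one,
        smul_mul_assoc]
      exact Finset.sum_comm
    exact (hR_inv.mul_left_cancel key).trans Algebra.TensorProduct.one_def
  have hE : ((1 : H) ⊗ₜ[k] (∑ i, (Coalgebra.counit (R := k) (r1 i)) • r2 i))
      = (1 : H) ⊗ₜ[k] (1 : H) := by
    have h3 := congrArg (LinearMap.rTensor H ((TensorProduct.lid k H).toLinearMap ∘ₗ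
        LinearMap.rTensor H (Coalgebra.counit (R := k)))) hR_comul_left
    simp only [map_sum, TensorProduct.map_tmul, LinearMap.id_coe, id_eq,
      LinearMap.lTensor_tmul, LinearMap.comp_apply, Coalgebra.rTensor_counit_comul,
      LinearEquiv.coe_coe, TensorProduct.lid_tmul, one_smul, LinearMap.rTensor_tmul,
      TensorProduct.smul_tmul'] at h3
    have key : ((1 : H) ⊗ₜ[k] (∑ i, (Coalgebra.counit (R := k) (r1 i)) • r2 i))
          * (∑ i, r1 i ⊗ₜ[k] r2 i)
        = 1 * (∑ i, r1 i ⊗ₜ[k] r2 i) := by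
      rw [one_mul]
      conv_rhs => rw [h3]
      simp only [TensorProduct.tmul_sum, TensorProduct.tmul_smul, Finset.sum_mul,
        Finset.mul_sum, smul_mul_assoc, Algebra.TensorProduct.tmul_mul_tmul, one_mul,
        TensorProduct.smul_tmul']
      exact Finset.sum_comm
    exact (hR_inv.mul_right_cancel key).trans Algebra.TensorProduct.one_def
  -- `κ(P) = 1 ⊗ 1`.
  have hkapP : kap (k := k)
        (∑ i, ∑ l, (Coalgebra.comul (R := k) (r2 l * r1 i)) ⊗ₜ[k] (r1 l * r2 i))
      = (1 : H) ⊗ₜ[k] (1 : H) := by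
    have step : kap (k := k)
          (∑ i, ∑ l, (Coalgebra.comul (R := k) (r2 l * r1 i)) ⊗ₜ[k] (r1 l * r2 i))
        = ∑ i, ∑ l, ((Coalgebra.counit (R := k) (r2 l)) * (Coalgebra.counit (R := k) (r1 i)))
            • ((1 : H) ⊗ₜ[k] (r1 l * r2 i)) := by
      rw [map_sum]
      refine Finset.sum_congr rfl fun i _ => ?_
      rw [map_sum]
      refine Finset.sum_congr rfl fun l _ => ?_
      rw [kap, LinearMap.rTensor_tmul, LinearMap.comp_apply,
        HopfAlgebra.mul_antipode_lTensor_comul_apply, Bialgebra.counit_mul,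
        Algebra.algebraMap_eq_smul_one, TensorProduct.smul_tmul']
    rw [step]
    have step2 : (∑ i, ∑ l,
          ((Coalgebra.counit (R := k) (r2 l)) * (Coalgebra.counit (R := k) (r1 i)))
            • ((1 : H) ⊗ₜ[k] (r1 l * r2 i)))
        = ((1 : H) ⊗ₜ[k] ((∑ l, (Coalgebra.counit (R := k) (r2 l)) • r1 l)
            * (∑ i, (Coalgebra.counit (R := k) (r1 i)) • r2 i))) := by
      rw [Finset.sum_comm]
      simp only [Finset.sum_mul, Finset.mul_sum, smul_mul_smul_comm,
        TensorProduct.tmul_sum, TensorProduct.tmul_smul]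
      exact Finset.sum_comm
    rw [step2]
    have h1F : (1 : H) ⊗ₜ[k] (∑ l, (Coalgebra.counit (R := k) (r2 l)) • r1 l)
        = (1 : H) ⊗ₜ[k] (1 : H) := by
      simpa using congrArg (TensorProduct.comm k H H) hF
    calc (1 : H) ⊗ₜ[k] ((∑ l, (Coalgebra.counit (R := k) (r2 l)) • r1 l)
            * (∑ i, (Coalgebra.counit (R := k) (r1 i)) • r2 i))
        = ((1 : H) ⊗ₜ[k] (∑ l, (Coalgebra.counit (R := k) (r2 l)) • r1 l))
            * ((1 : H) ⊗ₜ[k] (∑ i, (Coalgebra.counit (R := k) (r1 i)) • r2 i)) := by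
          rw [Algebra.TensorProduct.tmul_mul_tmul, one_mul]
      _ = (1 : H) ⊗ₜ[k] (1 : H) := by
          rw [h1F, hE, Algebra.TensorProduct.tmul_mul_tmul, one_mul]
  constructor
  · rintro ⟨Y, hY⟩ h
    have e1 : (∑ i, ∑ l, (Paper.adE (k := k) (r2 l * r1 i) h) ⊗ₜ[k] (r1 l * r2 i))
        = LinearMap.rTensor H (adAp (k := k) h)
            (∑ i, ∑ l, (Coalgebra.comul (R := k) (r2 l * r1 i)) ⊗ₜ[k] (r1 l * r2 i)) := by
      simp only [map_sum, LinearMap.rTensor_tmul, adE_eq]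
    have hABQ : (∑ i, ∑ l, (Coalgebra.comul (R := k) (r2 l * r1 i)) ⊗ₜ[k] (r1 l * r2 i))
        = (∑ l, ((1 : H) ⊗ₜ[k] r2 l) ⊗ₜ[k] r1 l)
          * psiMap (k := k) (LinearMap.rTensor H
              (Subalgebra.toSubmodule (Subalgebra.center k H)).subtype Y)
          * (∑ j, ((1 : H) ⊗ₜ[k] r1 j) ⊗ₜ[k] r2 j) := by
      rw [hY, hP]
      simp only [map_sum, psiMap_tmul, Finset.sum_mul, Finset.mul_sum,
        Algebra.TensorProduct.tmul_mul_tmul, one_mul, mul_one, mul_assoc]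
      exact sum_rev4 _
    have hkey : ∀ Z : (Subalgebra.toSubmodule (Subalgebra.center k H)) ⊗[k] H,
        LinearMap.rTensor H (adAp (k := k) h)
          ((∑ l, ((1 : H) ⊗ₜ[k] r2 l) ⊗ₜ[k] r1 l)
            * psiMap (k := k) (LinearMap.rTensor H
                (Subalgebra.toSubmodule (Subalgebra.center k H)).subtype Z)
            * (∑ j, ((1 : H) ⊗ₜ[k] r1 j) ⊗ₜ[k] r2 j))
        = (h ⊗ₜ[k] (1 : H)) * kap (k := k)
            ((∑ l, ((1 : H) ⊗ₜ[k] r2 l) ⊗ₜ[k] r1 l)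
              * psiMap (k := k) (LinearMap.rTensor H
                  (Subalgebra.toSubmodule (Subalgebra.center k H)).subtype Z)
              * (∑ j, ((1 : H) ⊗ₜ[k] r1 j) ⊗ₜ[k] r2 j)) := by
      intro Z
      induction Z using TensorProduct.induction_on with
      | zero => simp
      | tmul z q =>
          have hz : ∀ g : H, g * (z : H) = (z : H) * g :=
            Subalgebra.mem_center_iff.mp ((Subalgebra.mem_toSubmodule _).mp z.property)
          simp only [LinearMap.rTensor_tmul, Submodule.coe_subtype, psiMap_tmul,
            Finset.sum_mul, Finset.mul_sum, Algebra.TensorProduct.tmul_mul_tmul,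
            one_mul, mul_one, map_sum, adAp_tmul, kap_tmul]
          refine Finset.sum_congr rfl fun l _ => Finset.sum_congr rfl fun j _ => ?_
          congr 1
          rw [← mul_assoc, hz h]
      | add u v hu hv =>
          simp only [map_add, mul_add, add_mul, hu, hv]
    rw [e1, hABQ, hkey Y, ← hABQ, hkapP, Algebra.TensorProduct.tmul_mul_tmul,
      mul_one, mul_one]
  · intro hb
    apply mem_center_tensor
    intro h
    -- the hypothesis, in expanded form
    have hyp4 : ∀ h' : H, (∑ l, ∑ m, ∑ i, ∑ j,
        (((r2 m * r1 i) * h' * HopfAlgebra.antipode (R := k) (r2 l * r1 j)) ⊗ₜ[k]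
          (r1 l * (r1 m * (r2 i * r2 j))))) = h' ⊗ₜ[k] (1 : H) := by
      intro h'
      have e1 : (∑ i, ∑ l, (Paper.adE (k := k) (r2 l * r1 i) h') ⊗ₜ[k] (r1 l * r2 i))
          = LinearMap.rTensor H (adAp (k := k) h')
              (∑ i, ∑ l, (Coalgebra.comul (R := k) (r2 l * r1 i)) ⊗ₜ[k] (r1 l * r2 i)) := by
        simp only [map_sum, LinearMap.rTensor_tmul, adE_eq]
      have e2 : LinearMap.rTensor H (adAp (k := k) h')
            (∑ i, ∑ l, (Coalgebra.comul (R := k) (r2 l * r1 i)) ⊗ₜ[k] (r1 l * r2 i))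
          = ∑ l, ∑ m, ∑ i, ∑ j,
            (((r2 m * r1 i) * h' * HopfAlgebra.antipode (R := k) (r2 l * r1 j)) ⊗ₜ[k]
              (r1 l * (r1 m * (r2 i * r2 j)))) := by
        rw [hP]
        simp only [map_sum, LinearMap.rTensor_tmul, adAp_tmul]
      exact e2.symm.trans (e1.symm.trans (hb h'))
    -- step 1 : Q * (h ⊗ 1) = dmap h P
    have s1 : (∑ i, ∑ l, (r2 l * r1 i) ⊗ₜ[k] (r1 l * r2 i)) * (h ⊗ₜ[k] (1 : H))
        = dmap (k := k) h
            (∑ i, ∑ l, (Coalgebra.comul (R := k) (r2 l * r1 i)) ⊗ₜ[k] (r1 l * r2 i)) := by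
      simp only [Finset.sum_mul, Algebra.TensorProduct.tmul_mul_tmul, mul_one,
        map_sum, dmap_comul]
    -- step 2 : dmap h P = emap h (assoc (rTensor comul) P₂)
    have s2 : dmap (k := k) h
          (∑ i, ∑ l, (Coalgebra.comul (R := k) (r2 l * r1 i)) ⊗ₜ[k] (r1 l * r2 i))
        = ∑ i, ∑ l, emap (k := k) h
            (((TensorProduct.assoc k H H H)
              (LinearMap.rTensor H (Coalgebra.comul (R := k))
                (Coalgebra.comul (R := k) (r2 l * r1 i)))) ⊗ₜ[k] (r1 l * r2 i)) := by
      rw [map_sum]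
      refine Finset.sum_congr rfl fun i _ => ?_
      rw [map_sum]
      exact Finset.sum_congr rfl fun l _ => (emap_assoc h _ _).symm
    -- expansion of P₂
    have hΨ : ∀ w : H ⊗[k] H, LinearMap.rTensor H (Coalgebra.comul (R := k)) w
        = (Algebra.TensorProduct.map (Bialgebra.comulAlgHom k H) (AlgHom.id k H)) w := by
      intro w
      induction w using TensorProduct.induction_on with
      | zero => rw [LinearMap.map_zero, map_zero]
      | tmul x y =>
          rw [LinearMap.rTensor_tmul, Algebra.TensorProduct.map_tmul,
            Bialgebra.comulAlgHom_apply, AlgHom.coe_id, id_eq]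
      | add u v hu hv => rw [LinearMap.map_add, map_add, hu, hv]
    have hmulΨ : ∀ u v : H ⊗[k] H,
        LinearMap.rTensor H (Coalgebra.comul (R := k)) (u * v)
          = LinearMap.rTensor H (Coalgebra.comul (R := k)) u
            * LinearMap.rTensor H (Coalgebra.comul (R := k)) v := by
      intro u v
      rw [hΨ, hΨ, hΨ, map_mul]
    have hgl : ∀ l : ι, (∑ m, ((Coalgebra.comul (R := k) (r2 m)) ⊗ₜ[k] r2 l)
          ⊗ₜ[k] (r1 l * r1 m))
        = ∑ m, ∑ n, (((r2 n ⊗ₜ[k] r2 m) ⊗ₜ[k] r2 l) ⊗ₜ[k] (r1 l * (r1 m * r1 n))) := by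
      intro l
      have h0 := congrArg (TensorProduct.map
        ((TensorProduct.mk k (H ⊗[k] H) H).flip (r2 l)) (LinearMap.mulLeft k (r1 l))) hA
      simpa [map_sum, TensorProduct.map_tmul, LinearMap.flip_apply, TensorProduct.mk_apply,
        LinearMap.mulLeft_apply] using h0
    have hleft : (∑ l, (LinearMap.rTensor H (Coalgebra.comul (R := k))
            (Coalgebra.comul (R := k) (r2 l))) ⊗ₜ[k] r1 l)
        = ∑ l, ∑ m, ∑ n,
            ((((r2 n ⊗ₜ[k] r2 m) ⊗ₜ[k] r2 l) : (H ⊗[k] H) ⊗[k] H)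
              ⊗ₜ[k] (r1 l * (r1 m * r1 n))) := by
      have h1 := congrArg (LinearMap.rTensor H
        (LinearMap.rTensor H (Coalgebra.comul (R := k)))) hA
      simp only [map_sum, LinearMap.rTensor_tmul] at h1
      rw [h1]
      exact Finset.sum_congr rfl fun l _ => hgl l
    have hgr : ∀ b : ι, (∑ a, ((Coalgebra.comul (R := k) (r1 a)) ⊗ₜ[k] r1 b)
          ⊗ₜ[k] (r2 a * r2 b))
        = ∑ a, ∑ c, (((r1 a ⊗ₜ[k] r1 c) ⊗ₜ[k] r1 b) ⊗ₜ[k] ((r2 a * r2 c) * r2 b)) := by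
      intro b
      have h0 := congrArg (TensorProduct.map
        ((TensorProduct.mk k (H ⊗[k] H) H).flip (r1 b)) (LinearMap.mulRight k (r2 b))) hB
      simpa [map_sum, TensorProduct.map_tmul, LinearMap.flip_apply, TensorProduct.mk_apply,
        LinearMap.mulRight_apply] using h0
    have hright : (∑ i, (LinearMap.rTensor H (Coalgebra.comul (R := k))
            (Coalgebra.comul (R := k) (r1 i))) ⊗ₜ[k] r2 i)
        = ∑ b, ∑ a, ∑ c,
            ((((r1 a ⊗ₜ[k] r1 c) ⊗ₜ[k] r1 b) : (H ⊗[k] H) ⊗[k] H)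
              ⊗ₜ[k] ((r2 a * r2 c) * r2 b)) := by
      have h1 := congrArg (LinearMap.rTensor H
        (LinearMap.rTensor H (Coalgebra.comul (R := k)))) hB
      simp only [map_sum, LinearMap.rTensor_tmul] at h1
      rw [h1, Finset.sum_comm]
      exact Finset.sum_congr rfl fun b _ => hgr b
    have hfact : (∑ i, ∑ l, (LinearMap.rTensor H (Coalgebra.comul (R := k))
            (Coalgebra.comul (R := k) (r2 l * r1 i))) ⊗ₜ[k] (r1 l * r2 i))
        = (∑ l, (LinearMap.rTensor H (Coalgebra.comul (R := k))
            (Coalgebra.comul (R := k) (r2 l))) ⊗ₜ[k] r1 l)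
          * (∑ i, (LinearMap.rTensor H (Coalgebra.comul (R := k))
            (Coalgebra.comul (R := k) (r1 i))) ⊗ₜ[k] r2 i) := by
      simp only [Finset.sum_mul (R := ((H ⊗[k] H) ⊗[k] H) ⊗[k] H),
        Finset.mul_sum (R := ((H ⊗[k] H) ⊗[k] H) ⊗[k] H)]
      conv_rhs => rw [Finset.sum_comm]
      refine Finset.sum_congr rfl fun i _ => Finset.sum_congr rfl fun l _ => ?_
      rw [Bialgebra.comul_mul, hmulΨ, Algebra.TensorProduct.tmul_mul_tmul]
    have hP2 : (∑ i, ∑ l, (LinearMap.rTensor H (Coalgebra.comul (R := k))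
            (Coalgebra.comul (R := k) (r2 l * r1 i))) ⊗ₜ[k] (r1 l * r2 i))
        = ∑ l, ∑ m, ∑ n, ∑ b, ∑ a, ∑ c,
            ((((r2 n * r1 a) ⊗ₜ[k] (r2 m * r1 c)) ⊗ₜ[k] (r2 l * r1 b))
              ⊗ₜ[k] ((r1 l * (r1 m * r1 n)) * ((r2 a * r2 c) * r2 b))) := by
      rw [hfact, hleft, hright]
      simp only [Finset.sum_mul (R := ((H ⊗[k] H) ⊗[k] H) ⊗[k] H),
        Finset.mul_sum (R := ((H ⊗[k] H) ⊗[k] H) ⊗[k] H),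
        Algebra.TensorProduct.tmul_mul_tmul]
    -- step 3 : put everything together
    have reorder : ∀ f : ι → ι → ι → H ⊗[k] H,
        (∑ m, ∑ n, ∑ b, f m n b) = ∑ b, ∑ m, ∑ n, f m n b := by
      intro f
      calc (∑ m, ∑ n, ∑ b, f m n b) = ∑ m, ∑ b, ∑ n, f m n b :=
            Finset.sum_congr rfl fun m _ => Finset.sum_comm
        _ = ∑ b, ∑ m, ∑ n, f m n b := Finset.sum_comm
    have s4 : (∑ i, ∑ l, emap (k := k) h
            (((TensorProduct.assoc k H H H)
              (LinearMap.rTensor H (Coalgebra.comul (R := k))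
                (Coalgebra.comul (R := k) (r2 l * r1 i)))) ⊗ₜ[k] (r1 l * r2 i)))
        = (h ⊗ₜ[k] (1 : H)) * (∑ i, ∑ l, (r2 l * r1 i) ⊗ₜ[k] (r1 l * r2 i)) := by
      have expand : (∑ i, ∑ l, emap (k := k) h
            (((TensorProduct.assoc k H H H)
              (LinearMap.rTensor H (Coalgebra.comul (R := k))
                (Coalgebra.comul (R := k) (r2 l * r1 i)))) ⊗ₜ[k] (r1 l * r2 i)))
          = ∑ l, ∑ m, ∑ n, ∑ b, ∑ a, ∑ c,
              ((((r2 n * r1 a) * h) * (HopfAlgebra.antipode (R := k) (r2 m * r1 c)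
                  * (r2 l * r1 b)))
                ⊗ₜ[k] ((r1 l * (r1 m * r1 n)) * ((r2 a * r2 c) * r2 b))) := by
        have lhs_eq : (∑ i, ∑ l, emap (k := k) h
              (((TensorProduct.assoc k H H H)
                (LinearMap.rTensor H (Coalgebra.comul (R := k))
                  (Coalgebra.comul (R := k) (r2 l * r1 i)))) ⊗ₜ[k] (r1 l * r2 i)))
            = LinearMap.rTensor H ((LinearMap.mul' k H ∘ₗ
                TensorProduct.map (LinearMap.mulRight k h)
                  (LinearMap.mul' k H ∘ₗ LinearMap.rTensor H
                    (HopfAlgebra.antipode (R := k)))) ∘ₗ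
                  (TensorProduct.assoc k H H H).toLinearMap)
                (∑ i, ∑ l, (LinearMap.rTensor H (Coalgebra.comul (R := k))
                  (Coalgebra.comul (R := k) (r2 l * r1 i))) ⊗ₜ[k] (r1 l * r2 i)) := by
          simp only [map_sum, LinearMap.rTensor_tmul, emap, LinearMap.comp_apply,
            LinearEquiv.coe_coe]
        rw [lhs_eq, hP2]
        simp only [map_sum, LinearMap.rTensor_tmul, LinearMap.comp_apply,
          LinearEquiv.coe_coe, TensorProduct.assoc_tmul, TensorProduct.map_tmul,
          LinearMap.mul'_apply, LinearMap.mulRight_apply]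
      rw [expand]
      calc (∑ l, ∑ m, ∑ n, ∑ b, ∑ a, ∑ c,
              ((((r2 n * r1 a) * h) * (HopfAlgebra.antipode (R := k) (r2 m * r1 c)
                  * (r2 l * r1 b)))
                ⊗ₜ[k] ((r1 l * (r1 m * r1 n)) * ((r2 a * r2 c) * r2 b))))
          = ∑ l, ∑ b, ∑ m, ∑ n, ∑ a, ∑ c,
              ((((r2 n * r1 a) * h) * (HopfAlgebra.antipode (R := k) (r2 m * r1 c)
                  * (r2 l * r1 b)))
                ⊗ₜ[k] ((r1 l * (r1 m * r1 n)) * ((r2 a * r2 c) * r2 b))) :=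
            Finset.sum_congr rfl fun l _ => reorder _
        _ = ∑ l, ∑ b, (TensorProduct.map (LinearMap.mulRight k (r2 l * r1 b))
              (LinearMap.mulLeft k (r1 l) ∘ₗ LinearMap.mulRight k (r2 b)))
              (∑ m, ∑ n, ∑ a, ∑ c,
                (((r2 n * r1 a) * h * HopfAlgebra.antipode (R := k) (r2 m * r1 c)) ⊗ₜ[k]
                  (r1 m * (r1 n * (r2 a * r2 c))))) := by
            refine Finset.sum_congr rfl fun l _ => Finset.sum_congr rfl fun b _ => ?_
            simp only [map_sum, TensorProduct.map_tmul, LinearMap.mulRight_apply,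
              LinearMap.comp_apply, LinearMap.mulLeft_apply]
            refine Finset.sum_congr rfl fun m _ => Finset.sum_congr rfl fun n _ =>
              Finset.sum_congr rfl fun a _ => Finset.sum_congr rfl fun c _ => ?_
            rw [mul_assoc ((r2 n * r1 a) * h)]
            congr 1
            simp only [mul_assoc]
        _ = ∑ l, ∑ b, (TensorProduct.map (LinearMap.mulRight k (r2 l * r1 b))
              (LinearMap.mulLeft k (r1 l) ∘ₗ LinearMap.mulRight k (r2 b)))
              (h ⊗ₜ[k] (1 : H)) := by
            refine Finset.sum_congr rfl fun l _ => Finset.sum_congr rfl fun b _ => ?_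
            congr 1
            exact hyp4 h
        _ = (h ⊗ₜ[k] (1 : H)) * (∑ i, ∑ l, (r2 l * r1 i) ⊗ₜ[k] (r1 l * r2 i)) := by
            rw [Finset.sum_comm]
            simp only [TensorProduct.map_tmul, LinearMap.mulRight_apply,
              LinearMap.comp_apply, LinearMap.mulLeft_apply, one_mul, mul_one,
              Finset.mul_sum, Algebra.TensorProduct.tmul_mul_tmul]
    rw [s1, s2, s4]
end
end

section
/- Let A be a strongly separable left H-module algebra with symmetric separability idempotent x = x¹⊗x², and let α_A ∈ A* be determined by ⟨α_A,x¹⟩x² = 1_A. Then: (0) α_A is the trace function of the left regular representation of A, i.e. ⟨α_A,a⟩ = tr(b ↦ ab) for all a ∈ A; (1) x¹⟨x²⇀α_A, a⟩ = a and ⟨a*, x¹⟩(x²⇀α_A) = a* for all a ∈ A, a* ∈ A*, i.e. x¹ and x²⇀α_A form dual bases of A and A*; (2) if H is semisimple and involutory (S² = id_H), then h·x¹ ⊗ x² = x¹ ⊗ S(h)·x² for all h ∈ H; (3) under the hypotheses of (2), ⟨α_A, h·a⟩ = ε(h)⟨α_A, a⟩ for all h ∈ H, a ∈ A. -/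
open TensorProduct LinearMap

noncomputable section

open Paper

open Coalgebra HopfAlgebra

section Aux19
variable {k : Type} [CommSemiring k] {H : Type} [Semiring H] [HopfAlgebra k H]

lemma aux_repr_right_counit {h : H} (r : Coalgebra.Repr k h (H × H)) :
    ∑ i ∈ r.index, counit (R := k) (r.right i) • r.left i = h := by
  have h2 := congrArg (TensorProduct.rid k H) (Coalgebra.sum_tmul_counit_eq r)
  simp only [map_sum, TensorProduct.rid_tmul, one_smul] at h2
  exact h2

lemma aux_repr_left_counit {h : H} (r : Coalgebra.Repr k h (H × H)) :
    ∑ i ∈ r.index, counit (R := k) (r.left i) • r.right i = h := by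
  have h2 := congrArg (TensorProduct.lid k H) (Coalgebra.sum_counit_tmul_eq r)
  simp only [map_sum, TensorProduct.lid_tmul, one_smul] at h2
  exact h2

/-- A representation of `comul (a*b)` from representations of `a` and `b`. -/
def auxMulRepr {a b : H} (ra : Coalgebra.Repr k a (H × H)) (rb : Coalgebra.Repr k b (H × H)) :
    Coalgebra.Repr k (a * b) ((H × H) × (H × H)) where
  index := ra.index ×ˢ rb.index
  left p := ra.left p.1 * rb.left p.2
  right p := ra.right p.1 * rb.right p.2
  eq := by
    rw [Finset.sum_product, Bialgebra.comul_mul, ← ra.eq, ← rb.eq, Finset.sum_mul_sum]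
    simp [Algebra.TensorProduct.tmul_mul_tmul]

lemma aux_antipode_one : antipode (R := k) (1 : H) = 1 := by
  have := mul_antipode_rTensor_comul_apply (R := k) (A := H) (1 : H)
  simpa [Algebra.TensorProduct.one_def] using this

lemma aux_sum_swap4 {α β γ δ M : Type*} [AddCommMonoid M] (s1 : Finset α) (s2 : α → Finset β)
    (t1 : Finset γ) (t2 : γ → Finset δ) (G : α → β → γ → δ → M) :
    ∑ i ∈ s1, ∑ m ∈ s2 i, ∑ j ∈ t1, ∑ n ∈ t2 j, G i m j n
      = ∑ j ∈ t1, ∑ n ∈ t2 j, ∑ i ∈ s1, ∑ m ∈ s2 i, G i m j n := by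
  have h1 : ∀ (f : γ → δ → M), ∑ j ∈ t1, ∑ n ∈ t2 j, f j n
      = ∑ q ∈ t1.sigma t2, f q.1 q.2 := fun f => (Finset.sum_sigma t1 t2 (fun q => f q.1 q.2)).symm
  calc ∑ i ∈ s1, ∑ m ∈ s2 i, ∑ j ∈ t1, ∑ n ∈ t2 j, G i m j n
      = ∑ i ∈ s1, ∑ m ∈ s2 i, ∑ q ∈ t1.sigma t2, G i m q.1 q.2 :=
        Finset.sum_congr rfl fun i _ => Finset.sum_congr rfl fun m _ => h1 _
    _ = ∑ q ∈ t1.sigma t2, ∑ i ∈ s1, ∑ m ∈ s2 i, G i m q.1 q.2 := by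
        rw [Finset.sum_comm]
        exact Finset.sum_congr rfl fun i _ => Finset.sum_comm
    _ = ∑ j ∈ t1, ∑ n ∈ t2 j, ∑ i ∈ s1, ∑ m ∈ s2 i, G i m j n :=
        (h1 (fun j n => ∑ i ∈ s1, ∑ m ∈ s2 i, G i m j n)).symm

lemma aux_antipode_mul (u v : H) :
    antipode (R := k) (u * v) = antipode (R := k) v * antipode (R := k) u := by
  classical
  let ru := ℛ k u
  let rv := ℛ k v
  let ruL : ∀ i, Coalgebra.Repr k (ru.left i) (H × H) := fun i => ℛ k (ru.left i)
  let ruR : ∀ i, Coalgebra.Repr k (ru.right i) (H × H) := fun i => ℛ k (ru.right i)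
  let rvL : ∀ j, Coalgebra.Repr k (rv.left j) (H × H) := fun j => ℛ k (rv.left j)
  let rvR : ∀ j, Coalgebra.Repr k (rv.right j) (H × H) := fun j => ℛ k (rv.right j)
  let F : H → H → H → H → H → H → H := fun x1 x2 x3 y1 y2 y3 =>
    antipode (R := k) (x1 * y1) *
      (x2 * ((y2 * antipode (R := k) y3) * antipode (R := k) x3))
  -- Step I : the (R,R)-grouped sum equals S (u * v)
  have collapse_n : ∀ (x1 x2 x3 : H) (j : H × H),
      ∑ n ∈ (rvR j).index, F x1 x2 x3 (rv.left j) ((rvR j).left n) ((rvR j).right n)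
        = counit (R := k) (rv.right j) •
            (antipode (R := k) (x1 * rv.left j) * (x2 * antipode (R := k) x3)) := by
    intro x1 x2 x3 j
    calc ∑ n ∈ (rvR j).index, F x1 x2 x3 (rv.left j) ((rvR j).left n) ((rvR j).right n)
        = antipode (R := k) (x1 * rv.left j) *
            (x2 * ((∑ n ∈ (rvR j).index, (rvR j).left n * antipode (R := k) ((rvR j).right n))
              * antipode (R := k) x3)) := by
          rw [Finset.sum_mul, Finset.mul_sum, Finset.mul_sum]
      _ = _ := by
          rw [sum_mul_antipode_eq_smul (rvR j), smul_mul_assoc, one_mul, mul_smul_comm,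
            mul_smul_comm]
  have collapse_j : ∀ (x1 x2 x3 : H),
      ∑ j ∈ rv.index, counit (R := k) (rv.right j) •
          (antipode (R := k) (x1 * rv.left j) * (x2 * antipode (R := k) x3))
        = antipode (R := k) (x1 * v) * (x2 * antipode (R := k) x3) := by
    intro x1 x2 x3
    have h2 := congrArg (fun z => antipode (R := k) (x1 * z) * (x2 * antipode (R := k) x3))
      (aux_repr_right_counit rv)
    rw [← h2, Finset.mul_sum, map_sum, Finset.sum_mul]
    exact Finset.sum_congr rfl fun j _ => by
      rw [mul_smul_comm, map_smul, smul_mul_assoc]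
  have collapse_m : ∀ i : H × H,
      ∑ m ∈ (ruR i).index, antipode (R := k) (ru.left i * v) *
          ((ruR i).left m * antipode (R := k) ((ruR i).right m))
        = counit (R := k) (ru.right i) • antipode (R := k) (ru.left i * v) := by
    intro i
    rw [← Finset.mul_sum, sum_mul_antipode_eq_smul (ruR i), mul_smul_comm, mul_one]
  have collapse_i :
      ∑ i ∈ ru.index, counit (R := k) (ru.right i) • antipode (R := k) (ru.left i * v)
        = antipode (R := k) (u * v) := by
    have h2 := congrArg (fun z => antipode (R := k) (z * v)) (aux_repr_right_counit ru)
    rw [← h2, Finset.sum_mul, map_sum]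
    exact Finset.sum_congr rfl fun i _ => by rw [smul_mul_assoc, map_smul]
  have SI : ∑ i ∈ ru.index, ∑ m ∈ (ruR i).index, ∑ j ∈ rv.index, ∑ n ∈ (rvR j).index,
      F (ru.left i) ((ruR i).left m) ((ruR i).right m)
        (rv.left j) ((rvR j).left n) ((rvR j).right n) = antipode (R := k) (u * v) := by
    calc ∑ i ∈ ru.index, ∑ m ∈ (ruR i).index, ∑ j ∈ rv.index, ∑ n ∈ (rvR j).index,
        F (ru.left i) ((ruR i).left m) ((ruR i).right m)
          (rv.left j) ((rvR j).left n) ((rvR j).right n)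
        = ∑ i ∈ ru.index, ∑ m ∈ (ruR i).index,
            antipode (R := k) (ru.left i * v) *
              ((ruR i).left m * antipode (R := k) ((ruR i).right m)) := by
          refine Finset.sum_congr rfl fun i _ => Finset.sum_congr rfl fun m _ => ?_
          exact (Finset.sum_congr rfl fun j _ => collapse_n (ru.left i) ((ruR i).left m)
            ((ruR i).right m) j).trans (collapse_j _ _ _)
      _ = ∑ i ∈ ru.index, counit (R := k) (ru.right i) • antipode (R := k) (ru.left i * v) :=
          Finset.sum_congr rfl fun i _ => collapse_m i
      _ = antipode (R := k) (u * v) := collapse_i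
  -- Step III pieces
  have collapse_mn : ∀ (i j : H × H),
      ∑ m ∈ (ruL i).index, ∑ n ∈ (rvL j).index,
        F ((ruL i).left m) ((ruL i).right m) (ru.right i)
          ((rvL j).left n) ((rvL j).right n) (rv.right j)
      = (counit (R := k) (ru.left i) * counit (R := k) (rv.left j)) •
          (antipode (R := k) (rv.right j) * antipode (R := k) (ru.right i)) := by
    intro i j
    have key := sum_antipode_mul_eq_smul (auxMulRepr (ruL i) (rvL j))
    simp only [auxMulRepr] at key
    rw [Finset.sum_product] at key
    calc ∑ m ∈ (ruL i).index, ∑ n ∈ (rvL j).index,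
        F ((ruL i).left m) ((ruL i).right m) (ru.right i)
          ((rvL j).left n) ((rvL j).right n) (rv.right j)
        = ∑ m ∈ (ruL i).index, ∑ n ∈ (rvL j).index,
            (antipode (R := k) ((ruL i).left m * (rvL j).left n) *
              ((ruL i).right m * (rvL j).right n)) *
              (antipode (R := k) (rv.right j) * antipode (R := k) (ru.right i)) := by
          refine Finset.sum_congr rfl fun m _ => Finset.sum_congr rfl fun n _ => ?_
          simp only [F, mul_assoc]
      _ = (∑ m ∈ (ruL i).index, ∑ n ∈ (rvL j).index,
            antipode (R := k) ((ruL i).left m * (rvL j).left n) *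
              ((ruL i).right m * (rvL j).right n)) *
              (antipode (R := k) (rv.right j) * antipode (R := k) (ru.right i)) := by
          simp only [Finset.sum_mul]
      _ = _ := by
          rw [key, smul_mul_assoc, one_mul, Bialgebra.counit_mul]
  have collapse_j' : ∀ i : H × H,
      ∑ j ∈ rv.index, (counit (R := k) (ru.left i) * counit (R := k) (rv.left j)) •
          (antipode (R := k) (rv.right j) * antipode (R := k) (ru.right i))
        = counit (R := k) (ru.left i) •
            (antipode (R := k) v * antipode (R := k) (ru.right i)) := by
    intro i
    have h2 := congrArg (fun z => counit (R := k) (ru.left i) •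
        (antipode (R := k) z * antipode (R := k) (ru.right i))) (aux_repr_left_counit rv)
    rw [← h2, map_sum, Finset.sum_mul, Finset.smul_sum]
    refine Finset.sum_congr rfl fun j _ => ?_
    rw [map_smul, smul_mul_assoc, ← mul_smul]
  have collapse_i' :
      ∑ i ∈ ru.index, counit (R := k) (ru.left i) •
          (antipode (R := k) v * antipode (R := k) (ru.right i))
        = antipode (R := k) v * antipode (R := k) u := by
    have h2 := congrArg (fun z => antipode (R := k) v * antipode (R := k) z)
      (aux_repr_left_counit ru)
    rw [← h2, map_sum, Finset.mul_sum]
    refine Finset.sum_congr rfl fun i _ => ?_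
    rw [map_smul, mul_smul_comm]
  have SIII : ∑ i ∈ ru.index, ∑ m ∈ (ruL i).index, ∑ j ∈ rv.index, ∑ n ∈ (rvL j).index,
      F ((ruL i).left m) ((ruL i).right m) (ru.right i)
        ((rvL j).left n) ((rvL j).right n) (rv.right j)
      = antipode (R := k) v * antipode (R := k) u := by
    calc ∑ i ∈ ru.index, ∑ m ∈ (ruL i).index, ∑ j ∈ rv.index, ∑ n ∈ (rvL j).index,
        F ((ruL i).left m) ((ruL i).right m) (ru.right i)
          ((rvL j).left n) ((rvL j).right n) (rv.right j)
        = ∑ i ∈ ru.index, ∑ j ∈ rv.index, ∑ m ∈ (ruL i).index, ∑ n ∈ (rvL j).index,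
            F ((ruL i).left m) ((ruL i).right m) (ru.right i)
              ((rvL j).left n) ((rvL j).right n) (rv.right j) :=
          Finset.sum_congr rfl fun i _ => Finset.sum_comm
      _ = ∑ i ∈ ru.index, ∑ j ∈ rv.index,
            (counit (R := k) (ru.left i) * counit (R := k) (rv.left j)) •
              (antipode (R := k) (rv.right j) * antipode (R := k) (ru.right i)) :=
          Finset.sum_congr rfl fun i _ => Finset.sum_congr rfl fun j _ => collapse_mn i j
      _ = ∑ i ∈ ru.index, counit (R := k) (ru.left i) •
            (antipode (R := k) v * antipode (R := k) (ru.right i)) :=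
          Finset.sum_congr rfl fun i _ => collapse_j' i
      _ = antipode (R := k) v * antipode (R := k) u := collapse_i'
  -- the two hops (regroupings via coassociativity)
  have hopU : ∀ y1 y2 y3 : H,
      ∑ i ∈ ru.index, ∑ m ∈ (ruL i).index,
        F ((ruL i).left m) ((ruL i).right m) (ru.right i) y1 y2 y3
      = ∑ i ∈ ru.index, ∑ m ∈ (ruR i).index,
        F (ru.left i) ((ruR i).left m) ((ruR i).right m) y1 y2 y3 := by
    intro y1 y2 y3
    have h2 := congrArg (fun z => (LinearMap.mul' k H ∘ₗ TensorProduct.map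
        (antipode (R := k) ∘ₗ LinearMap.mulRight k y1)
        (LinearMap.mul' k H ∘ₗ LinearMap.lTensor H
          (LinearMap.mulLeft k (y2 * antipode (R := k) y3) ∘ₗ antipode (R := k)))) z)
      (Coalgebra.sum_tmul_tmul_eq ru ruL ruR)
    simpa only [map_sum, LinearMap.coe_comp, Function.comp_apply, TensorProduct.map_tmul,
      LinearMap.mul'_apply, LinearMap.lTensor_tmul, LinearMap.mulLeft_apply,
      LinearMap.mulRight_apply] using h2
  have hopV : ∀ x1 x2 x3 : H,
      ∑ j ∈ rv.index, ∑ n ∈ (rvL j).index,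
        F x1 x2 x3 ((rvL j).left n) ((rvL j).right n) (rv.right j)
      = ∑ j ∈ rv.index, ∑ n ∈ (rvR j).index,
        F x1 x2 x3 (rv.left j) ((rvR j).left n) ((rvR j).right n) := by
    intro x1 x2 x3
    have h2 := congrArg (fun z => (LinearMap.mul' k H ∘ₗ TensorProduct.map
        (antipode (R := k) ∘ₗ LinearMap.mulLeft k x1)
        (LinearMap.mulLeft k x2 ∘ₗ LinearMap.mulRight k (antipode (R := k) x3) ∘ₗ
          LinearMap.mul' k H ∘ₗ LinearMap.lTensor H (antipode (R := k)))) z)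
      (Coalgebra.sum_tmul_tmul_eq rv rvL rvR)
    simpa only [map_sum, LinearMap.coe_comp, Function.comp_apply, TensorProduct.map_tmul,
      LinearMap.mul'_apply, LinearMap.lTensor_tmul, LinearMap.mulLeft_apply,
      LinearMap.mulRight_apply] using h2
  -- assemble
  calc antipode (R := k) (u * v)
      = ∑ i ∈ ru.index, ∑ m ∈ (ruR i).index, ∑ j ∈ rv.index, ∑ n ∈ (rvR j).index,
          F (ru.left i) ((ruR i).left m) ((ruR i).right m)
            (rv.left j) ((rvR j).left n) ((rvR j).right n) := SI.symm
    _ = ∑ j ∈ rv.index, ∑ n ∈ (rvR j).index, ∑ i ∈ ru.index, ∑ m ∈ (ruR i).index,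
          F (ru.left i) ((ruR i).left m) ((ruR i).right m)
            (rv.left j) ((rvR j).left n) ((rvR j).right n) :=
        aux_sum_swap4 ru.index (fun i => (ruR i).index) rv.index (fun j => (rvR j).index) _
    _ = ∑ j ∈ rv.index, ∑ n ∈ (rvR j).index, ∑ i ∈ ru.index, ∑ m ∈ (ruL i).index,
          F ((ruL i).left m) ((ruL i).right m) (ru.right i)
            (rv.left j) ((rvR j).left n) ((rvR j).right n) :=
        Finset.sum_congr rfl fun j _ => Finset.sum_congr rfl fun n _ =>
          (hopU (rv.left j) ((rvR j).left n) ((rvR j).right n)).symm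
    _ = ∑ i ∈ ru.index, ∑ m ∈ (ruL i).index, ∑ j ∈ rv.index, ∑ n ∈ (rvR j).index,
          F ((ruL i).left m) ((ruL i).right m) (ru.right i)
            (rv.left j) ((rvR j).left n) ((rvR j).right n) :=
        (aux_sum_swap4 ru.index (fun i => (ruL i).index) rv.index (fun j => (rvR j).index) _).symm
    _ = ∑ i ∈ ru.index, ∑ m ∈ (ruL i).index, ∑ j ∈ rv.index, ∑ n ∈ (rvL j).index,
          F ((ruL i).left m) ((ruL i).right m) (ru.right i)
            ((rvL j).left n) ((rvL j).right n) (rv.right j) :=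
        Finset.sum_congr rfl fun i _ => Finset.sum_congr rfl fun m _ =>
          (hopV ((ruL i).left m) ((ruL i).right m) (ru.right i)).symm
    _ = antipode (R := k) v * antipode (R := k) u := SIII


lemma aux_antipode_swap (hinv : ∀ h : H, antipode (R := k) (antipode (R := k) h) = h)
    (h : H) (r : Coalgebra.Repr k h (H × H)) :
    ∑ i ∈ r.index, antipode (R := k) (r.right i) * r.left i
      = counit (R := k) h • (1 : H) := by
  have h1 : antipode (R := k) (∑ i ∈ r.index, antipode (R := k) (r.right i) * r.left i)
      = counit (R := k) h • (1 : H) := by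
    rw [map_sum]
    exact (Finset.sum_congr rfl fun i _ => by
      rw [aux_antipode_mul, hinv]).trans (sum_antipode_mul_eq_smul r)
  calc ∑ i ∈ r.index, antipode (R := k) (r.right i) * r.left i
      = antipode (R := k) (antipode (R := k)
          (∑ i ∈ r.index, antipode (R := k) (r.right i) * r.left i)) := (hinv _).symm
    _ = antipode (R := k) (counit (R := k) h • (1 : H)) := by rw [h1]
    _ = counit (R := k) h • (1 : H) := by rw [map_smul, aux_antipode_one]

end Aux19


/-- Let `H` be a finite-dimensional Hopf algebra over a field of
characteristic zero and `A` a strongly separable left `H`-module algebra with symmetric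
separability idempotent `x = ∑ j, x1 j ⊗ x2 j`, and let `α_A` be determined by
`∑ j, α_A(x1 j) • x2 j = 1`.  Then: (0) `α_A` is the trace of the left regular representation;
(1) `x¹` and `x²⇀α_A` are dual bases of `A` and `A*`; (2) if `H` is semisimple and involutory
then `h·x¹ ⊗ x² = x¹ ⊗ S(h)·x²`; (3) under the hypotheses of (2),
`α_A(h·a) = ε(h) α_A(a)`. -/
theorem statement_19
    {k : Type} [Field k] [CharZero k]
    {H : Type} [Ring H] [HopfAlgebra k H] [FiniteDimensional k H]
    {A : Type} [Ring A] [Algebra k A]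
    -- the action of `H` on `A`, making `A` a left `H`-module algebra
    (act : H →ₗ[k] A →ₗ[k] A)
    (hact_one : ∀ a : A, act 1 a = a)
    (hact_mul : ∀ (g h : H) (a : A), act (g * h) a = act g (act h a))
    (hact_algmul : ∀ (h : H) (a b : A),
      act h (a * b) = LinearMap.mul' k A
        (TensorProduct.map (act.flip a) (act.flip b) (Coalgebra.comul h)))
    (hact_algone : ∀ h : H, act h (1 : A) = Coalgebra.counit (R := k) h • (1 : A))
    -- strong separability of `A`: symmetric separability idempotent `∑ j, x1 j ⊗ x2 j`
    {κ : Type} [Fintype κ] (x1 x2 : κ → A)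
    (hsep_mid : ∀ a : A, ∑ j, (a * x1 j) ⊗ₜ[k] (x2 j) = ∑ j, (x1 j) ⊗ₜ[k] (x2 j * a))
    (hsep_mul : ∑ j, x1 j * x2 j = (1 : A))
    (hsep_symm : ∑ j, (x1 j) ⊗ₜ[k] (x2 j) = ∑ j, (x2 j) ⊗ₜ[k] (x1 j))
    (αA : A →ₗ[k] k) (hα : ∑ j, αA (x1 j) • (x2 j) = (1 : A)) :
    -- (0) `α_A` is the trace form of the left regular representation
    (∀ a : A, αA a = LinearMap.trace k A (LinearMap.mulLeft k a)) ∧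
    -- (1) `x¹ ⊗ (x² ⇀ α_A)` is a pair of dual bases for `A` and `A*`
    (∀ a : A, ∑ j, (αA (a * x2 j)) • (x1 j) = a) ∧
    (∀ p : Module.Dual k A,
      ∑ j, (p (x1 j)) • (αA ∘ₗ LinearMap.mulRight k (x2 j)) = p) ∧
    -- (2) if `H` is semisimple and involutory, then `h·x¹ ⊗ x² = x¹ ⊗ S(h)·x²`
    ((∀ h : H, HopfAlgebra.antipode (R := k) (HopfAlgebra.antipode (R := k) h) = h) →
      IsSemisimpleRing H →
      ∀ h : H, ∑ j, (act h (x1 j)) ⊗ₜ[k] (x2 j)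
        = ∑ j, (x1 j) ⊗ₜ[k] (act (HopfAlgebra.antipode (R := k) h) (x2 j))) ∧
    -- (3) under the hypotheses of (2), `α_A(h·a) = ε(h) α_A(a)`
    ((∀ h : H, HopfAlgebra.antipode (R := k) (HopfAlgebra.antipode (R := k) h) = h) →
      IsSemisimpleRing H →
      ∀ (h : H) (a : A), αA (act h a) = Coalgebra.counit (R := k) h * αA a) := by
  classical
  -- ### elementary dual-basis identities
  have e1 : ∀ a : A, ∑ j, αA (a * x1 j) • x2 j = a := by
    intro a
    have h2 := congrArg (fun z => (TensorProduct.lid k A)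
      ((LinearMap.rTensor A αA) z)) (hsep_mid a)
    simp only [map_sum, LinearMap.rTensor_tmul, TensorProduct.lid_tmul] at h2
    rw [h2]
    calc ∑ j, αA (x1 j) • (x2 j * a) = (∑ j, αA (x1 j) • x2 j) * a := by
          rw [Finset.sum_mul]
          exact Finset.sum_congr rfl fun j _ => (smul_mul_assoc _ _ _).symm
      _ = a := by rw [hα, one_mul]
  have hsymm_smul : ∀ (f : A →ₗ[k] k), ∑ j, f (x1 j) • x2 j = ∑ j, f (x2 j) • x1 j := by
    intro f
    have h2 := congrArg (fun z => (TensorProduct.lid k A)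
      ((LinearMap.rTensor A f) z)) hsep_symm
    simpa only [map_sum, LinearMap.rTensor_tmul, TensorProduct.lid_tmul] using h2
  have hα2 : ∑ j, αA (x2 j) • x1 j = (1 : A) := by rw [← hsymm_smul αA, hα]
  have part1a : ∀ a : A, ∑ j, αA (a * x2 j) • x1 j = a := by
    intro a
    have := hsymm_smul (αA ∘ₗ LinearMap.mulLeft k a)
    simp only [LinearMap.comp_apply, LinearMap.mulLeft_apply] at this
    rw [← this, e1 a]
  have dual2 : ∀ b : A, ∑ j, αA (x2 j * b) • x1 j = b := by
    intro b
    have h2 := congrArg (fun z => (TensorProduct.lid k A)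
      ((LinearMap.rTensor A αA) ((TensorProduct.comm k A A) z))) (hsep_mid b)
    simp only [map_sum, TensorProduct.comm_tmul, LinearMap.rTensor_tmul,
      TensorProduct.lid_tmul] at h2
    rw [← h2]
    calc ∑ j, αA (x2 j) • (b * x1 j) = b * ∑ j, αA (x2 j) • x1 j := by
          rw [Finset.mul_sum]
          exact Finset.sum_congr rfl fun j _ => (mul_smul_comm _ _ _).symm
      _ = b := by rw [hα2, mul_one]
  -- ### A is finite dimensional
  haveI finA : Module.Finite k A := by
    refine ⟨⟨Finset.univ.image x1, ?_⟩⟩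
    rw [eq_top_iff]
    intro a _
    rw [← part1a a]
    refine Submodule.sum_mem _ fun j _ => Submodule.smul_mem _ _ (Submodule.subset_span ?_)
    simp
  -- ### trace of a rank-one operator
  have tr_rank1 : ∀ (φ : A →ₗ[k] k) (v : A),
      LinearMap.trace k A (φ.smulRight v) = φ v := by
    intro φ v
    have h1 : φ.smulRight v = (LinearMap.toSpanSingleton k A v) ∘ₗ φ := by
      ext a; simp [LinearMap.toSpanSingleton_apply]
    rw [h1, LinearMap.trace_comp_comm']
    have h2 : φ ∘ₗ LinearMap.toSpanSingleton k A v = (φ v) • LinearMap.id := by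
      ext c
      simp [LinearMap.toSpanSingleton_apply, mul_comm]
    rw [h2, LinearMap.map_smul, LinearMap.trace_id]
    simp
  -- ### part (0)
  have part0 : ∀ a : A, αA a = LinearMap.trace k A (LinearMap.mulLeft k a) := by
    intro a
    have hml : LinearMap.mulLeft k a
        = ∑ j, (αA ∘ₗ LinearMap.mulRight k (x2 j)).smulRight (a * x1 j) := by
      ext b
      simp only [LinearMap.mulLeft_apply, LinearMap.sum_apply, LinearMap.smulRight_apply,
        LinearMap.comp_apply, LinearMap.mulRight_apply]
      conv_lhs => rw [← part1a b]
      rw [Finset.mul_sum]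
      exact Finset.sum_congr rfl fun j _ => by rw [mul_smul_comm]
    rw [hml, map_sum]
    rw [Finset.sum_congr rfl fun j (_ : j ∈ Finset.univ) => tr_rank1 (αA ∘ₗ LinearMap.mulRight k (x2 j)) (a * x1 j)]
    simp only [LinearMap.comp_apply, LinearMap.mulRight_apply]
    rw [← map_sum]
    have hcollapse : ∑ j, a * x1 j * x2 j = a := by
      calc ∑ j, a * x1 j * x2 j = a * ∑ j, x1 j * x2 j := by
            rw [Finset.mul_sum]; exact Finset.sum_congr rfl fun j _ => (mul_assoc _ _ _)
        _ = a := by rw [hsep_mul, mul_one]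
    rw [hcollapse]
  -- ### part (1b)
  have part1b : ∀ p : Module.Dual k A,
      ∑ j, (p (x1 j)) • (αA ∘ₗ LinearMap.mulRight k (x2 j)) = p := by
    intro p
    ext a
    simp only [LinearMap.sum_apply, LinearMap.smul_apply, LinearMap.comp_apply,
      LinearMap.mulRight_apply, smul_eq_mul]
    conv_rhs => rw [← part1a a]
    rw [map_sum]
    exact Finset.sum_congr rfl fun j _ => by rw [map_smul, smul_eq_mul, mul_comm]
  -- ### the key expansion  a ⊳ d · c = ∑ h₁ ⊳ (d · (S h₂ ⊳ c))
  have key : ∀ (g : H) (d c : A) (r : Coalgebra.Repr k g (H × H)),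
      act g d * c = ∑ i ∈ r.index,
        act (r.left i) (d * act (antipode (R := k) (r.right i)) c) := by
    intro g d c r
    let r1 : ∀ i, Coalgebra.Repr k (r.left i) (H × H) := fun i => ℛ k (r.left i)
    let r2 : ∀ i, Coalgebra.Repr k (r.right i) (H × H) := fun i => ℛ k (r.right i)
    have h2 := congrArg (fun z => (LinearMap.mul' k A ∘ₗ TensorProduct.map (act.flip d)
        ((act.flip c) ∘ₗ LinearMap.mul' k H ∘ₗ LinearMap.lTensor H (antipode (R := k)))) z)
      (Coalgebra.sum_tmul_tmul_eq r r1 r2)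
    simp only [map_sum, LinearMap.coe_comp, Function.comp_apply, TensorProduct.map_tmul,
      LinearMap.mul'_apply, LinearMap.lTensor_tmul, LinearMap.flip_apply] at h2
    have hRHS : ∀ i, ∑ n ∈ (r2 i).index,
        act (r.left i) d * act ((r2 i).left n * antipode (R := k) ((r2 i).right n)) c
        = counit (R := k) (r.right i) • (act (r.left i) d * c) := by
      intro i
      have hsum : ∑ n ∈ (r2 i).index,
          act ((r2 i).left n * antipode (R := k) ((r2 i).right n)) c
          = counit (R := k) (r.right i) • c := by
        have h3 := congrArg (fun z => act z c) (sum_mul_antipode_eq_smul (r2 i))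
        simpa only [map_sum, map_smul, LinearMap.sum_apply, LinearMap.smul_apply,
          hact_one] using h3
      rw [← Finset.mul_sum, hsum, mul_smul_comm]
    have hL : ∀ i, act (r.left i) (d * act (antipode (R := k) (r.right i)) c)
        = ∑ m ∈ (r1 i).index,
          act ((r1 i).left m) d * act ((r1 i).right m * antipode (R := k) (r.right i)) c := by
      intro i
      rw [hact_algmul, ← (r1 i).eq, map_sum, map_sum]
      exact Finset.sum_congr rfl fun m _ => by
        simp only [TensorProduct.map_tmul, LinearMap.mul'_apply, LinearMap.flip_apply,
          hact_mul]
    have hfin := congrArg (fun z => act z d * c) (aux_repr_right_counit r)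
    simp only [map_sum, map_smul, LinearMap.sum_apply, LinearMap.smul_apply,
      Finset.sum_mul, smul_mul_assoc] at hfin
    calc act g d * c
        = ∑ i ∈ r.index, counit (R := k) (r.right i) • (act (r.left i) d * c) := hfin.symm
      _ = ∑ i ∈ r.index, ∑ n ∈ (r2 i).index,
            act (r.left i) d * act ((r2 i).left n * antipode (R := k) ((r2 i).right n)) c :=
          (Finset.sum_congr rfl fun i _ => hRHS i).symm
      _ = ∑ i ∈ r.index, ∑ m ∈ (r1 i).index,
            act ((r1 i).left m) d * act ((r1 i).right m * antipode (R := k) (r.right i)) c :=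
          h2.symm
      _ = ∑ i ∈ r.index, act (r.left i) (d * act (antipode (R := k) (r.right i)) c) :=
          (Finset.sum_congr rfl fun i _ => hL i).symm
  -- ### part (3)
  have part3 : (∀ h : H, antipode (R := k) (antipode (R := k) h) = h) →
      ∀ (h : H) (a : A), αA (act h a) = counit (R := k) h * αA a := by
    intro hinv h a
    set r := ℛ k h with hr
    have hdecomp : LinearMap.mulLeft k (act h a) = ∑ i ∈ r.index,
        act (r.left i) ∘ₗ (LinearMap.mulLeft k a ∘ₗ act (antipode (R := k) (r.right i))) := by
      ext b
      simp only [LinearMap.mulLeft_apply, LinearMap.sum_apply, LinearMap.comp_apply]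
      exact key h a b r
    have hcyc : ∀ i, LinearMap.trace k A
        (act (r.left i) ∘ₗ (LinearMap.mulLeft k a ∘ₗ act (antipode (R := k) (r.right i))))
        = LinearMap.trace k A
          (LinearMap.mulLeft k a ∘ₗ act (antipode (R := k) (r.right i) * r.left i)) := by
      intro i
      have h4 : (LinearMap.mulLeft k a ∘ₗ act (antipode (R := k) (r.right i))) ∘ₗ act (r.left i)
          = LinearMap.mulLeft k a ∘ₗ act (antipode (R := k) (r.right i) * r.left i) := by
        ext b
        simp [hact_mul]
      rw [← h4, LinearMap.trace_comp_comm']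
    let χ : H →ₗ[k] k := (LinearMap.trace k A) ∘ₗ
      (LinearMap.llcomp k A A A (LinearMap.mulLeft k a)) ∘ₗ act
    have hχ : ∀ z : H, χ z = LinearMap.trace k A (LinearMap.mulLeft k a ∘ₗ act z) := fun z => rfl
    have hsw := congrArg (fun z => χ z) (aux_antipode_swap hinv h r)
    simp only [map_sum, map_smul] at hsw
    have hone : χ 1 = LinearMap.trace k A (LinearMap.mulLeft k a) := by
      rw [hχ]
      congr 1
      ext b
      simp [hact_one]
    calc αA (act h a) = LinearMap.trace k A (LinearMap.mulLeft k (act h a)) := part0 _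
      _ = ∑ i ∈ r.index, LinearMap.trace k A
            (act (r.left i) ∘ₗ (LinearMap.mulLeft k a ∘ₗ act (antipode (R := k) (r.right i)))) := by
          rw [hdecomp, map_sum]
      _ = ∑ i ∈ r.index, χ (antipode (R := k) (r.right i) * r.left i) :=
          Finset.sum_congr rfl fun i _ => hcyc i
      _ = counit (R := k) h • χ 1 := hsw
      _ = counit (R := k) h * αA a := by rw [hone, ← part0 a, smul_eq_mul]
  -- ### part (2)
  have part2 : (∀ h : H, antipode (R := k) (antipode (R := k) h) = h) →
      ∀ h : H, ∑ j, (act h (x1 j)) ⊗ₜ[k] (x2 j)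
        = ∑ j, (x1 j) ⊗ₜ[k] (act (antipode (R := k) h) (x2 j)) := by
    intro hinv h
    have core : ∀ (g : H) (c : A),
        ∑ j, αA (act g (x2 j) * c) • x1 j = act (antipode (R := k) g) c := by
      intro g c
      have hper : ∀ j0 : κ, αA (act g (x2 j0) * c)
          = αA (x2 j0 * act (antipode (R := k) g) c) := by
        intro j0
        set r := ℛ k g with hr
        rw [key g (x2 j0) c r, map_sum]
        rw [Finset.sum_congr rfl fun i (_ : i ∈ r.index) => part3 hinv (r.left i)
          (x2 j0 * act (antipode (R := k) (r.right i)) c)]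
        have h5 := congrArg (fun z => αA (x2 j0 * act (antipode (R := k) z) c))
          (aux_repr_left_counit r)
        simp only [map_sum, map_smul, LinearMap.sum_apply, LinearMap.smul_apply,
          Finset.mul_sum, mul_smul_comm, smul_eq_mul] at h5
        rw [← h5]
      rw [Finset.sum_congr rfl fun j (_ : j ∈ Finset.univ) => by rw [hper j]]
      exact dual2 _
    have recon : ∀ u : A ⊗[k] A, ∑ j, ((TensorProduct.rid k A)
        ((LinearMap.lTensor A (αA ∘ₗ LinearMap.mulRight k (x2 j))) u)) ⊗ₜ[k] x1 j = u := by
      intro u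
      induction u using TensorProduct.induction_on with
      | zero => simp
      | tmul a b =>
        simp only [LinearMap.lTensor_tmul, LinearMap.comp_apply, LinearMap.mulRight_apply,
          TensorProduct.rid_tmul]
        calc ∑ j, (αA (b * x2 j) • a) ⊗ₜ[k] x1 j
            = ∑ j, a ⊗ₜ[k] (αA (b * x2 j) • x1 j) :=
              Finset.sum_congr rfl fun j _ => TensorProduct.smul_tmul _ _ _
          _ = a ⊗ₜ[k] (∑ j, αA (b * x2 j) • x1 j) := by rw [TensorProduct.tmul_sum]
          _ = a ⊗ₜ[k] b := by rw [part1a b]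
      | add x y hx hy =>
        simp only [map_add, TensorProduct.add_tmul]
        rw [Finset.sum_add_distrib, hx, hy]
    have probeL : ∀ j0 : κ, (TensorProduct.rid k A)
        ((LinearMap.lTensor A (αA ∘ₗ LinearMap.mulRight k (x2 j0)))
          (∑ j, (act h (x1 j)) ⊗ₜ[k] (x2 j))) = act h (x2 j0) := by
      intro j0
      simp only [map_sum, LinearMap.lTensor_tmul, LinearMap.comp_apply,
        LinearMap.mulRight_apply, TensorProduct.rid_tmul]
      have h6 := congrArg (fun z => act h z) (dual2 (x2 j0))
      simpa only [map_sum, map_smul] using h6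
    have probeR : ∀ j0 : κ, (TensorProduct.rid k A)
        ((LinearMap.lTensor A (αA ∘ₗ LinearMap.mulRight k (x2 j0)))
          (∑ j, (x1 j) ⊗ₜ[k] (act (antipode (R := k) h) (x2 j)))) = act h (x2 j0) := by
      intro j0
      simp only [map_sum, LinearMap.lTensor_tmul, LinearMap.comp_apply,
        LinearMap.mulRight_apply, TensorProduct.rid_tmul]
      rw [core (antipode (R := k) h) (x2 j0), hinv h]
    calc ∑ j, (act h (x1 j)) ⊗ₜ[k] (x2 j)
        = ∑ j0, ((TensorProduct.rid k A)
            ((LinearMap.lTensor A (αA ∘ₗ LinearMap.mulRight k (x2 j0)))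
              (∑ j, (act h (x1 j)) ⊗ₜ[k] (x2 j)))) ⊗ₜ[k] x1 j0 := (recon _).symm
      _ = ∑ j0, (act h (x2 j0)) ⊗ₜ[k] x1 j0 :=
          Finset.sum_congr rfl fun j0 _ => by rw [probeL j0]
      _ = ∑ j0, ((TensorProduct.rid k A)
            ((LinearMap.lTensor A (αA ∘ₗ LinearMap.mulRight k (x2 j0)))
              (∑ j, (x1 j) ⊗ₜ[k] (act (antipode (R := k) h) (x2 j))))) ⊗ₜ[k] x1 j0 :=
          (Finset.sum_congr rfl fun j0 _ => by rw [probeR j0]).symm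
      _ = ∑ j, (x1 j) ⊗ₜ[k] (act (antipode (R := k) h) (x2 j)) := recon _
  exact ⟨part0, part1a, part1b, fun hinv _ => part2 hinv, fun hinv _ => part3 hinv⟩
end
end
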